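/- There exists a constant C > 0 such that uniformly for all nonzero complex z, |z·j_κ(z)| ≤ C·e^{|Im z|}·(|z|/(1+|z|))^{κ+1}. -/

import Mathlib

/-- `z·j_κ(z)`: the spherical Bessel function of the first kind times `z`,
defined by its power series. -/
noncomputable def zj (κ : ℕ) (z : ℂ) : ℂ :=
  ((Real.sqrt Real.pi : ℂ) / 2) * z *
    ∑' ℓ : ℕ, ((-1) ^ ℓ / ((ℓ.factorial : ℂ) * Complex.Gamma ((ℓ : ℂ) + (κ : ℂ) + 3 / 2)))
      * (z / 2) ^ (2 * ℓ + κ)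

/-!
Poisson's integral gives `z·j_κ(z) = z^{κ+1} / (2^{κ+1} κ!) · ∫_{-1}^{1} e^{izt} (1 - t²)^κ dt`:
expand `e^{izt}`, integrate termwise, and evaluate the even moments of `(1 - t²)^κ` by the
recursion coming from integration by parts. The integral is at most `2 e^{|Im z|}` in norm. Since
`(1 - t²)^κ` vanishes to order `κ` at `±1`, integrating by parts `κ + 1` times leaves no boundary
terms until the last step, so `|z|^{κ+1}` times the integral is also `O(e^{|Im z|})`. The two bounds
combine through `(1 + |z|)^{κ+1} ≤ 2^κ (1 + |z|^{κ+1})`.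
-/

open Complex Polynomial Set

noncomputable def unitFourier (z : ℂ) (f : ℝ → ℂ) : ℂ :=
  ∫ t in (-1 : ℝ)..1, cexp (I * z * t) * f t

section

variable (z : ℂ)

lemma norm_cexp_I_mul_mul_le {t : ℝ} (ht : |t| ≤ 1) :
    ‖cexp (I * z * t)‖ ≤ Real.exp |z.im| := by
  rw [norm_exp, Real.exp_le_exp]
  have hre : (I * z * t).re = -z.im * t := by simp
  rw [hre]
  calc -z.im * t ≤ |z.im| * |t| := by rw [← abs_neg z.im, ← abs_mul]; exact le_abs_self _
    _ ≤ |z.im| := mul_le_of_le_one_right (abs_nonneg _) ht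

lemma norm_unitFourier_le {f : ℝ → ℂ} {M : ℝ} (hf : ∀ t ∈ Icc (-1 : ℝ) 1, ‖f t‖ ≤ M) :
    ‖unitFourier z f‖ ≤ 2 * M * Real.exp |z.im| := by
  have hbound : ∀ t ∈ uIoc (-1 : ℝ) 1, ‖cexp (I * z * t) * f t‖ ≤ M * Real.exp |z.im| := by
    intro t ht
    rw [uIoc_of_le (by norm_num)] at ht
    have ht' : t ∈ Icc (-1 : ℝ) 1 := Ioc_subset_Icc_self ht
    rw [norm_mul, mul_comm M]
    exact mul_le_mul (norm_cexp_I_mul_mul_le z (abs_le.2 ht')) (hf t ht') (norm_nonneg _)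
      (Real.exp_pos _).le
  have := intervalIntegral.norm_integral_le_of_norm_le_const hbound
  rw [unitFourier]
  norm_num at this
  linarith

lemma hasDerivAt_cexp_I_mul_mul (t : ℝ) :
    HasDerivAt (fun s : ℝ => cexp (I * z * s)) (I * z * cexp (I * z * t)) t := by
  have h : HasDerivAt (fun w : ℂ => cexp (I * z * w)) (cexp (I * z * t) * (I * z)) t := by
    simpa using ((hasDerivAt_id (t : ℂ)).const_mul (I * z)).cexp
  simpa [mul_comm] using h.comp_ofReal

lemma I_mul_mul_unitFourier_eval (p : ℂ[X]) :
    I * z * unitFourier z (fun t => p.eval (t : ℂ)) =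
      cexp (I * z) * p.eval 1 - cexp (-(I * z)) * p.eval (-1)
        - unitFourier z (fun t => (derivative p).eval (t : ℂ)) := by
  have hp : ∀ t : ℝ, HasDerivAt (fun s : ℝ => p.eval (s : ℂ)) ((derivative p).eval (t : ℂ)) t :=
    fun t => (p.hasDerivAt (t : ℂ)).comp_ofReal
  have hcont : Continuous fun t : ℝ => (derivative p).eval (t : ℂ) := by fun_prop
  have h := intervalIntegral.integral_mul_deriv_eq_deriv_mul (a := (-1 : ℝ)) (b := 1)
    (fun t _ => hp t) (fun t _ => hasDerivAt_cexp_I_mul_mul z t)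
    (hcont.intervalIntegrable _ _) ((by fun_prop : Continuous fun t : ℝ =>
      I * z * cexp (I * z * t)).intervalIntegrable _ _)
  calc I * z * unitFourier z (fun t => p.eval (t : ℂ))
      = ∫ t in (-1 : ℝ)..1, p.eval (t : ℂ) * (I * z * cexp (I * z * t)) := by
        rw [unitFourier, ← intervalIntegral.integral_const_mul]
        congr 1 with t
        ring
    _ = _ := h
    _ = _ := by simp [unitFourier, mul_comm]

lemma I_mul_pow_mul_unitFourier_eval {p : ℂ[X]} {n : ℕ}
    (hp : ∀ j < n, (derivative^[j] p).IsRoot 1 ∧ (derivative^[j] p).IsRoot (-1)) :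
    (I * z) ^ n * unitFourier z (fun t => p.eval (t : ℂ)) =
      (-1) ^ n * unitFourier z (fun t => (derivative^[n] p).eval (t : ℂ)) := by
  induction n with
  | zero => simp
  | succ n ih =>
    obtain ⟨h1, h2⟩ := hp n n.lt_succ_self
    rw [pow_succ', mul_assoc, ih fun j hj => hp j (hj.trans n.lt_succ_self), mul_left_comm,
      I_mul_mul_unitFourier_eval, h1.eq_zero, h2.eq_zero, Function.iterate_succ_apply']
    ring

lemma exists_norm_mul_unitFourier_eval_le (p : ℂ[X]) :
    ∃ C, ∀ z : ℂ, ‖z‖ * ‖unitFourier z (fun t => p.eval (t : ℂ))‖ ≤ C * Real.exp |z.im| := by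
  obtain ⟨M, hM⟩ := isCompact_Icc.exists_bound_of_continuousOn
    (by fun_prop : Continuous fun t : ℝ => (derivative p).eval (t : ℂ)).continuousOn
  refine ⟨‖p.eval 1‖ + ‖p.eval (-1)‖ + 2 * M, fun z => ?_⟩
  have hIz : ‖z‖ = ‖I * z‖ := by simp
  rw [hIz, ← norm_mul, I_mul_mul_unitFourier_eval]
  have hR := norm_unitFourier_le z hM
  have hL : ‖cexp (I * z)‖ ≤ Real.exp |z.im| := by
    simpa using norm_cexp_I_mul_mul_le z (t := 1) (by norm_num)
  have hL' : ‖cexp (-(I * z))‖ ≤ Real.exp |z.im| := by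
    simpa using norm_cexp_I_mul_mul_le z (t := -1) (by norm_num)
  calc _ ≤ ‖cexp (I * z)‖ * ‖p.eval 1‖ + ‖cexp (-(I * z))‖ * ‖p.eval (-1)‖
        + ‖unitFourier z (fun t => (derivative p).eval (t : ℂ))‖ := by
        refine (norm_sub_le _ _).trans (add_le_add_left ((norm_sub_le _ _).trans ?_) _)
        rw [norm_mul, norm_mul]
    _ ≤ Real.exp |z.im| * ‖p.eval 1‖ + Real.exp |z.im| * ‖p.eval (-1)‖
        + 2 * M * Real.exp |z.im| := by gcongr
    _ = _ := by ring

lemma exists_norm_pow_mul_unitFourier_eval_le {p : ℂ[X]} {n : ℕ}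
    (hp : ∀ j < n, (derivative^[j] p).IsRoot 1 ∧ (derivative^[j] p).IsRoot (-1)) :
    ∃ C, ∀ z : ℂ, ‖z‖ ^ (n + 1) * ‖unitFourier z (fun t => p.eval (t : ℂ))‖ ≤
      C * Real.exp |z.im| := by
  obtain ⟨C, hC⟩ := exists_norm_mul_unitFourier_eval_le (derivative^[n] p)
  refine ⟨C, fun z => ?_⟩
  have h := congrArg norm (I_mul_pow_mul_unitFourier_eval z hp)
  simp only [norm_mul, norm_pow, norm_I, one_mul, norm_neg, norm_one, one_pow] at h
  rw [pow_succ', mul_assoc, h]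
  exact hC z

end

lemma isRoot_iterate_derivative_one_sub_sq_pow {R : Type*} [CommRing R] {κ j : ℕ} (hj : j < κ)
    {x : R} (hx : x = 1 ∨ x = -1) : (derivative^[j] ((1 - X ^ 2) ^ κ : R[X])).IsRoot x := by
  have hdvd : X - C x ∣ (1 - X ^ 2 : R[X]) := by
    rcases hx with rfl | rfl
    · exact ⟨-(X + 1), by simp only [map_one]; ring⟩
    · exact ⟨1 - X, by simp only [map_neg, map_one]; ring⟩
  have := pow_sub_dvd_iterate_derivative_of_pow_dvd j (pow_dvd_pow_of_dvd hdvd κ)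
  exact dvd_iff_isRoot.1 ((dvd_pow_self _ (Nat.sub_ne_zero_of_lt hj)).trans this)

noncomputable def oneSubSqMoment (κ m : ℕ) : ℝ :=
  ∫ t in (-1 : ℝ)..1, t ^ m * (1 - t ^ 2) ^ κ

lemma oneSubSqMoment_odd (κ k : ℕ) : oneSubSqMoment κ (2 * k + 1) = 0 := by
  have h := intervalIntegral.integral_comp_neg (a := (-1 : ℝ)) (b := 1)
    (fun t : ℝ => t ^ (2 * k + 1) * (1 - t ^ 2) ^ κ)
  simp only [Odd.neg_pow (odd_two_mul_add_one k), neg_sq, neg_mul,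
    intervalIntegral.integral_neg, neg_neg] at h
  rw [oneSubSqMoment]
  linarith

lemma oneSubSqMoment_zero_even (ℓ : ℕ) : oneSubSqMoment 0 (2 * ℓ) = 2 / (2 * ℓ + 1) := by
  simp only [oneSubSqMoment, pow_zero, mul_one, integral_pow]
  rw [Odd.neg_pow (by exact odd_two_mul_add_one ℓ)]
  push_cast
  ring

lemma intervalIntegrable_pow_mul_one_sub_sq_pow (κ m : ℕ) :
    IntervalIntegrable (fun t : ℝ => t ^ m * (1 - t ^ 2) ^ κ) MeasureTheory.volume (-1) 1 :=
  (by fun_prop : Continuous fun t : ℝ => t ^ m * (1 - t ^ 2) ^ κ).intervalIntegrable _ _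

lemma oneSubSqMoment_succ_eq_sub (κ m : ℕ) :
    oneSubSqMoment (κ + 1) m = oneSubSqMoment κ m - oneSubSqMoment κ (m + 2) := by
  rw [oneSubSqMoment, oneSubSqMoment, oneSubSqMoment, ← intervalIntegral.integral_sub
    (intervalIntegrable_pow_mul_one_sub_sq_pow κ m)
    (intervalIntegrable_pow_mul_one_sub_sq_pow κ (m + 2))]
  congr 1 with t
  ring

/-- Integrate the derivative of `t ^ (m + 1) * (1 - t²) ^ (κ + 1)`, which vanishes at `±1`. -/
lemma succ_mul_oneSubSqMoment_succ (κ m : ℕ) :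
    (m + 1) * oneSubSqMoment (κ + 1) m = (2 * κ + 2) * oneSubSqMoment κ (m + 2) := by
  have hderiv : ∀ t : ℝ, HasDerivAt (fun s => s ^ (m + 1) * (1 - s ^ 2) ^ (κ + 1))
      ((m + 1) * (t ^ m * (1 - t ^ 2) ^ (κ + 1))
        - (2 * κ + 2) * (t ^ (m + 2) * (1 - t ^ 2) ^ κ)) t := by
    intro t
    refine ((hasDerivAt_pow (m + 1) t).fun_mul
      (((hasDerivAt_pow 2 t).const_sub 1).fun_pow (κ + 1))).congr_deriv ?_
    push_cast
    ring
  have hi₁ := (intervalIntegrable_pow_mul_one_sub_sq_pow (κ + 1) m).const_mul ((m : ℝ) + 1)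
  have hi₂ := (intervalIntegrable_pow_mul_one_sub_sq_pow κ (m + 2)).const_mul (2 * (κ : ℝ) + 2)
  have hint := intervalIntegral.integral_eq_sub_of_hasDerivAt (fun t _ => hderiv t) (hi₁.sub hi₂)
  rw [intervalIntegral.integral_sub hi₁ hi₂, intervalIntegral.integral_const_mul,
    intervalIntegral.integral_const_mul] at hint
  rw [oneSubSqMoment, oneSubSqMoment]
  norm_num at hint
  linarith

lemma oneSubSqMoment_succ (κ m : ℕ) :
    (m + 2 * κ + 3) * oneSubSqMoment (κ + 1) m = (2 * κ + 2) * oneSubSqMoment κ m := by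
  have h1 := succ_mul_oneSubSqMoment_succ κ m
  have h2 := oneSubSqMoment_succ_eq_sub κ m
  linear_combination h1 + (2 * (κ : ℝ) + 2) * h2

lemma Real.Gamma_nat_add_half_mul (ℓ : ℕ) :
    Real.Gamma (ℓ + 1 / 2) * 4 ^ ℓ * ℓ.factorial = √Real.pi * (2 * ℓ).factorial := by
  induction ℓ with
  | zero => simp [-one_div, Real.Gamma_one_half_eq]
  | succ ℓ ih =>
    rw [Nat.cast_succ, add_right_comm, Real.Gamma_add_one (by positivity),
      show 2 * (ℓ + 1) = 2 * ℓ + 1 + 1 by ring, Nat.factorial_succ, Nat.factorial_succ,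
      Nat.factorial_succ]
    push_cast
    linear_combination (4 * ((ℓ : ℝ) + 1 / 2) * (ℓ + 1)) * ih

lemma oneSubSqMoment_even (κ ℓ : ℕ) :
    oneSubSqMoment κ (2 * ℓ) = √Real.pi * (2 * ℓ).factorial * κ.factorial /
      (4 ^ ℓ * ℓ.factorial * Real.Gamma (ℓ + κ + 3 / 2)) := by
  rw [eq_div_iff (mul_ne_zero (by positivity) (Real.Gamma_pos_of_pos (by positivity)).ne')]
  induction κ with
  | zero =>
    rw [oneSubSqMoment_zero_even, ← Real.Gamma_nat_add_half_mul, Nat.cast_zero, add_zero,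
      show (ℓ : ℝ) + 3 / 2 = ℓ + 1 / 2 + 1 by ring, Real.Gamma_add_one (by positivity)]
    field_simp
    ring
  | succ κ ih =>
    have h := oneSubSqMoment_succ κ (2 * ℓ)
    rw [Nat.cast_succ, show (ℓ : ℝ) + (κ + 1) + 3 / 2 = ℓ + κ + 3 / 2 + 1 by ring,
      Real.Gamma_add_one (by positivity), Nat.factorial_succ]
    push_cast at h ⊢
    linear_combination (4 ^ ℓ * ℓ.factorial * Real.Gamma (ℓ + κ + 3 / 2) / 2) * h + (κ + 1) * ih

section

variable (z : ℂ)

lemma hasSum_cexp_I_mul_mul (t : ℝ) :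
    HasSum (fun m : ℕ => (I * z) ^ m / m.factorial * (t : ℂ) ^ m) (cexp (I * z * t)) := by
  rw [Complex.exp_eq_exp_ℂ]
  simpa [mul_pow, mul_div_right_comm] using NormedSpace.expSeries_div_hasSum_exp (I * z * t)

lemma hasSum_unitFourier {f : ℝ → ℂ} (hf : Continuous f) :
    HasSum (fun m : ℕ => (I * z) ^ m / m.factorial * ∫ t in (-1 : ℝ)..1, (t : ℂ) ^ m * f t)
      (unitFourier z f) := by
  obtain ⟨M, hM⟩ := (isCompact_Icc (a := (-1 : ℝ)) (b := 1)).exists_bound_of_continuousOn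
    hf.continuousOn
  simp only [← intervalIntegral.integral_const_mul]
  refine intervalIntegral.hasSum_integral_of_dominated_convergence
    (fun m _ => ‖z‖ ^ m / m.factorial * M) (fun m => by fun_prop) ?_ ?_ ?_ ?_
  · refine fun m => Filter.Eventually.of_forall fun t ht => ?_
    rw [uIoc_of_le (by norm_num)] at ht
    have ht' : |t| ≤ 1 := abs_le.2 ⟨ht.1.le, ht.2⟩
    rw [← mul_assoc, norm_mul]
    refine mul_le_mul ?_ (hM t (Ioc_subset_Icc_self ht)) (norm_nonneg _) (by positivity)
    simp only [norm_mul, norm_div, norm_pow, norm_I, one_mul, norm_natCast, norm_real,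
      Real.norm_eq_abs]
    exact mul_le_of_le_one_right (by positivity) (pow_le_one₀ (abs_nonneg t) ht')
  · exact Filter.Eventually.of_forall fun t _ =>
      (Real.summable_pow_div_factorial ‖z‖).mul_right M
  · exact intervalIntegrable_const
  · refine Filter.Eventually.of_forall fun t _ => ?_
    simpa only [mul_assoc] using (hasSum_cexp_I_mul_mul z t).mul_right (f t)

lemma zj_term_eq (κ ℓ : ℕ) :
    (√Real.pi / 2 : ℂ) * z *
        ((-1) ^ ℓ / (ℓ.factorial * Gamma (ℓ + κ + 3 / 2)) * (z / 2) ^ (2 * ℓ + κ))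
      = z ^ (κ + 1) / (2 ^ (κ + 1) * κ.factorial) *
        ((I * z) ^ (2 * ℓ) / (2 * ℓ).factorial * (oneSubSqMoment κ (2 * ℓ) : ℂ)) := by
  have hΓ : Gamma (ℓ + κ + 3 / 2) = (Real.Gamma (ℓ + κ + 3 / 2) : ℂ) := by
    rw [← Gamma_ofReal]; push_cast; rfl
  have hΓ₀ : (Real.Gamma (ℓ + κ + 3 / 2) : ℂ) ≠ 0 :=
    ofReal_ne_zero.2 (Real.Gamma_pos_of_pos (by positivity)).ne'
  rw [oneSubSqMoment_even, hΓ, mul_pow, pow_mul I, I_sq, div_pow z]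
  push_cast
  rw [show (4 : ℂ) ^ ℓ = 2 ^ (2 * ℓ) by rw [pow_mul]; norm_num]
  have hℓ : (ℓ.factorial : ℂ) ≠ 0 := Nat.cast_ne_zero.2 ℓ.factorial_ne_zero
  have h2ℓ : ((2 * ℓ).factorial : ℂ) ≠ 0 := Nat.cast_ne_zero.2 (2 * ℓ).factorial_ne_zero
  have hκ : (κ.factorial : ℂ) ≠ 0 := Nat.cast_ne_zero.2 κ.factorial_ne_zero
  field_simp
  ring

theorem zj_eq_mul_unitFourier (κ : ℕ) :
    zj κ z = z ^ (κ + 1) / (2 ^ (κ + 1) * κ.factorial) *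
      unitFourier z (fun t => (1 - (t : ℂ) ^ 2) ^ κ) := by
  have hmoment : ∀ m, ∫ t in (-1 : ℝ)..1, (t : ℂ) ^ m * (1 - (t : ℂ) ^ 2) ^ κ
      = (oneSubSqMoment κ m : ℂ) := by
    intro m
    rw [oneSubSqMoment, ← intervalIntegral.integral_ofReal]
    push_cast
    rfl
  have hall := hasSum_unitFourier z (f := fun t => (1 - (t : ℂ) ^ 2) ^ κ) (by fun_prop)
  simp only [hmoment] at hall
  have heven : HasSum (fun ℓ : ℕ => (I * z) ^ (2 * ℓ) / (2 * ℓ).factorial *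
      (oneSubSqMoment κ (2 * ℓ) : ℂ)) (unitFourier z (fun t => (1 - (t : ℂ) ^ 2) ^ κ)) := by
    refine ((mul_right_injective₀ two_ne_zero).hasSum_iff fun m hm => ?_).2 hall
    obtain ⟨k, rfl | rfl⟩ := Nat.even_or_odd' m
    · exact absurd ⟨k, rfl⟩ hm
    · simp [oneSubSqMoment_odd]
  rw [zj, ← tsum_mul_left, ← (heven.mul_left _).tsum_eq]
  exact tsum_congr (zj_term_eq z κ)

end

lemma norm_one_sub_sq_pow_le_one {t : ℝ} (ht : t ∈ Icc (-1 : ℝ) 1) (κ : ℕ) :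
    ‖(1 - (t : ℂ) ^ 2) ^ κ‖ ≤ 1 := by
  have ht2 : t ^ 2 ≤ 1 := by nlinarith [ht.1, ht.2]
  rw [norm_pow, show (1 - (t : ℂ) ^ 2) = ((1 - t ^ 2 : ℝ) : ℂ) by push_cast; rfl, norm_real,
    Real.norm_of_nonneg (by linarith)]
  exact pow_le_one₀ (by linarith) (by nlinarith)

lemma pow_mul_le_mul_div_one_add_pow {r x A B : ℝ} (n : ℕ) (hr : 0 ≤ r) (hx : 0 ≤ x)
    (hA : x ≤ A) (hB : r ^ n * x ≤ B) :
    r ^ n * x ≤ 2 ^ (n - 1) * (A + B) * (r / (1 + r)) ^ n := by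
  have hsum : (1 + r) ^ n * x ≤ 2 ^ (n - 1) * (A + B) :=
    calc (1 + r) ^ n * x ≤ 2 ^ (n - 1) * (1 ^ n + r ^ n) * x :=
          mul_le_mul_of_nonneg_right (add_pow_le zero_le_one hr n) hx
      _ = 2 ^ (n - 1) * (x + r ^ n * x) := by ring
      _ ≤ 2 ^ (n - 1) * (A + B) := by gcongr
  calc r ^ n * x = (r / (1 + r)) ^ n * ((1 + r) ^ n * x) := by
        rw [div_pow]; field_simp
    _ ≤ (r / (1 + r)) ^ n * (2 ^ (n - 1) * (A + B)) := by gcongr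
    _ = _ := mul_comm _ _

/-- the uniform bound `|z·j_κ(z)| ≤ C·e^{|Im z|}·(|z|/(1+|z|))^{κ+1}`
for all nonzero complex `z`. -/
theorem zj_uniform_bound (κ : ℕ) :
    ∃ C : ℝ, 0 < C ∧ ∀ z : ℂ, z ≠ 0 →
      ‖zj κ z‖ ≤ C * Real.exp |z.im| * (‖z‖ / (1 + ‖z‖)) ^ (κ + 1) := by
  obtain ⟨C, hC⟩ := exists_norm_pow_mul_unitFourier_eval_le (p := (1 - X ^ 2) ^ κ) (n := κ)
    fun j hj => ⟨isRoot_iterate_derivative_one_sub_sq_pow hj (.inl rfl),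
      isRoot_iterate_derivative_one_sub_sq_pow hj (.inr rfl)⟩
  have hC₀ : 0 ≤ C := by simpa using hC 0
  refine ⟨(2 + C) / (2 * κ.factorial), by positivity, fun z _ => ?_⟩
  set F := ‖unitFourier z (fun t => (1 - (t : ℂ) ^ 2) ^ κ)‖
  have hsmall : F ≤ 2 * Real.exp |z.im| := by
    simpa using norm_unitFourier_le z fun t ht => norm_one_sub_sq_pow_le_one ht κ
  have hlarge : ‖z‖ ^ (κ + 1) * F ≤ C * Real.exp |z.im| := by simpa using hC z
  have hcombined : ‖z‖ ^ (κ + 1) * F ≤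
      2 ^ κ * (2 * Real.exp |z.im| + C * Real.exp |z.im|) * (‖z‖ / (1 + ‖z‖)) ^ (κ + 1) :=
    pow_mul_le_mul_div_one_add_pow (κ + 1) (norm_nonneg z) (norm_nonneg _) hsmall hlarge
  rw [zj_eq_mul_unitFourier, norm_mul, norm_div, norm_mul, norm_pow, norm_pow, norm_natCast,
    Complex.norm_ofNat]
  calc ‖z‖ ^ (κ + 1) / (2 ^ (κ + 1) * κ.factorial) * F
      = ‖z‖ ^ (κ + 1) * F / (2 ^ (κ + 1) * κ.factorial) := by ring
    _ ≤ _ := div_le_div_of_nonneg_right hcombined (by positivity)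
    _ = _ := by
      field_simp
      ring
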